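/- Fix a real α > 0, a partition μ with at most n rows, and a partition λ. Then ∑_{T ∈ RSSYT(μ,n)} ψ_T(α) · ∏_{s=(i,j) ∈ μ} (λ_{T(s)} − (j−1) + (i−1)/α) ≥ 0, where ψ_T(α) ≥ 0 for all T. In particular, P^#_μ(λ) ≥ 0 for α > 0. -/

import Mathlib

/-!
Write `f(i,j) = λ_{T(i,j)} − (j−1) + (i−1)/α` for the factor of box `(i,j)`. Going down a column,
`T` strictly decreases, so `λ_T` weakly increases, and `(i−1)/α` strictly increases: a negative
factor anywhere forces a negative factor in the first row of the same column. In the first row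
`g(j) = f(1,j) = λ_{T(1,j)} − (j−1)` is an integer with `g(1) ≥ 0` that drops by at most one per
step, so on its way to a negative value it must hit `0`, and the product vanishes.
-/

open Finset

/-- The boxes of the Young diagram of a partition `μ` with at most `n` rows, indexed
starting from `1`: box `(i,j)` with `1 ≤ i ≤ n` and `1 ≤ j ≤ μ i`. -/
def youngBoxes (μ : ℕ → ℕ) (n : ℕ) : Finset (ℕ × ℕ) :=
  (Finset.Icc 1 n ×ˢ Finset.Icc 1 (μ 1)).filter (fun p => p.2 ≤ μ p.1)

theorem Finset.prod_nonneg_of_neg_imp_exists_zero {ι R : Type*} [CommMonoidWithZero R]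
    [LinearOrder R] [ZeroLEOneClass R] [PosMulMono R] {s : Finset ι} {f : ι → R}
    (h : ∀ i ∈ s, f i < 0 → ∃ j ∈ s, f j = 0) : 0 ≤ ∏ i ∈ s, f i := by
  by_cases hzero : ∃ j ∈ s, f j = 0
  · obtain ⟨j, hj, hfj⟩ := hzero
    exact (prod_eq_zero hj hfj).ge
  · exact prod_nonneg fun i hi => not_lt.mp fun hneg => hzero (h i hi hneg)

theorem Int.exists_eq_zero_of_sub_one_le_succ {g : ℕ → ℤ} {a b : ℕ} (hab : a ≤ b)
    (ha : 0 ≤ g a) (hb : g b ≤ 0) (hstep : ∀ k, a ≤ k → k < b → g k - 1 ≤ g (k + 1)) :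
    ∃ k, a ≤ k ∧ k ≤ b ∧ g k = 0 := by
  induction b, hab using Nat.le_induction with
  | base => exact ⟨a, le_rfl, le_rfl, le_antisymm hb ha⟩
  | succ b hab ih =>
    by_cases hgb : g b ≤ 0
    · obtain ⟨k, hak, hkb, hk⟩ := ih hgb fun k hak hkb => hstep k hak (by omega)
      exact ⟨k, hak, by omega, hk⟩
    · have := hstep b hab (by omega)
      exact ⟨b + 1, by omega, le_rfl, by omega⟩

/-- The factor `λ_{T(s)} − a'(s) + l'(s)/α` of the box `s` in `P^#_μ(λ)`. -/
noncomputable def shiftedFactor (α : ℝ) (lam : ℕ → ℕ) (T : ℕ × ℕ → ℕ) (s : ℕ × ℕ) : ℝ :=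
  (lam (T s) : ℝ) - ((s.2 : ℝ) - 1) + ((s.1 : ℝ) - 1) / α

section shiftedFactor

variable {α : ℝ} {lam : ℕ → ℕ} {T : ℕ × ℕ → ℕ}

theorem shiftedFactor_lt_shiftedFactor_succ (hα : 0 < α) (hlam : ∀ k l, 1 ≤ k → k ≤ l → lam l ≤ lam k)
    {i j : ℕ} (hpos : 1 ≤ T (i + 1, j)) (hcol : T (i + 1, j) < T (i, j)) :
    shiftedFactor α lam T (i, j) < shiftedFactor α lam T (i + 1, j) := by
  have hlam_le : (lam (T (i, j)) : ℝ) ≤ lam (T (i + 1, j)) := by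
    exact_mod_cast hlam _ _ hpos hcol.le
  have hleg : ((i : ℝ) - 1) / α < ((i + 1 : ℕ) - 1 : ℝ) / α := by
    gcongr
    linarith
  unfold shiftedFactor
  linarith

theorem shiftedFactor_first_row_neg_of_neg (hα : 0 < α) {μ : ℕ → ℕ}
    (hμ : ∀ k l, 1 ≤ k → k ≤ l → μ l ≤ μ k) (hlam : ∀ k l, 1 ≤ k → k ≤ l → lam l ≤ lam k)
    (hpos : ∀ i j, 1 ≤ i → 1 ≤ j → j ≤ μ i → 1 ≤ T (i, j))
    (hcol : ∀ i j, 1 ≤ i → 1 ≤ j → j ≤ μ (i + 1) → T (i + 1, j) < T (i, j))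
    {i j : ℕ} (hi : 1 ≤ i) (hj : 1 ≤ j) (hjμ : j ≤ μ i)
    (hneg : shiftedFactor α lam T (i, j) < 0) : shiftedFactor α lam T (1, j) < 0 := by
  induction i, hi using Nat.le_induction with
  | base => exact hneg
  | succ i hi ih =>
    refine ih (hjμ.trans (hμ i (i + 1) hi (by omega))) (lt_trans ?_ hneg)
    exact shiftedFactor_lt_shiftedFactor_succ hα hlam (hpos _ _ (by omega) hj hjμ) (hcol i j hi hj hjμ)

theorem shiftedFactor_one (α : ℝ) (lam : ℕ → ℕ) (T : ℕ × ℕ → ℕ) (j : ℕ) :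
    shiftedFactor α lam T (1, j) = (((lam (T (1, j)) : ℤ) - ((j : ℤ) - 1) : ℤ) : ℝ) := by
  simp [shiftedFactor]

theorem shiftedFactor_exists_zero_of_neg (hα : 0 < α) {n : ℕ} {μ : ℕ → ℕ}
    (hμ : ∀ k l, 1 ≤ k → k ≤ l → μ l ≤ μ k) (hlam : ∀ k l, 1 ≤ k → k ≤ l → lam l ≤ lam k)
    (hpos : ∀ i j, 1 ≤ i → 1 ≤ j → j ≤ μ i → 1 ≤ T (i, j))
    (hrow : ∀ i j, 1 ≤ i → 1 ≤ j → j + 1 ≤ μ i → T (i, j + 1) ≤ T (i, j))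
    (hcol : ∀ i j, 1 ≤ i → 1 ≤ j → j ≤ μ (i + 1) → T (i + 1, j) < T (i, j))
    {s : ℕ × ℕ} (hs : s ∈ youngBoxes μ n) (hneg : shiftedFactor α lam T s < 0) :
    ∃ t ∈ youngBoxes μ n, shiftedFactor α lam T t = 0 := by
  obtain ⟨i, j⟩ := s
  simp only [youngBoxes, mem_filter, mem_product, mem_Icc] at hs
  obtain ⟨⟨⟨hi, hin⟩, hj, -⟩, hjμ⟩ := hs
  have hjμ1 : j ≤ μ 1 := hjμ.trans (hμ 1 i le_rfl hi)
  set g : ℕ → ℤ := fun k => (lam (T (1, k)) : ℤ) - ((k : ℤ) - 1)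
  have hg : ∀ k, shiftedFactor α lam T (1, k) = g k := shiftedFactor_one α lam T
  have hgj : g j ≤ 0 := by
    have := shiftedFactor_first_row_neg_of_neg hα hμ hlam hpos hcol hi hj hjμ hneg
    rw [hg] at this
    exact_mod_cast this.le
  have hstep : ∀ k, 1 ≤ k → k < j → g k - 1 ≤ g (k + 1) := by
    intro k hk hkj
    have : lam (T (1, k)) ≤ lam (T (1, k + 1)) :=
      hlam _ _ (hpos 1 (k + 1) le_rfl (by omega) (by omega)) (hrow 1 k le_rfl hk (by omega))
    simp only [g]
    push_cast
    omega
  obtain ⟨k, hk, hkj, hgk⟩ :=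
    Int.exists_eq_zero_of_sub_one_le_succ hj (by simp [g]) hgj hstep
  refine ⟨(1, k), ?_, by rw [hg, hgk, Int.cast_zero]⟩
  simp only [youngBoxes, mem_filter, mem_product, mem_Icc]
  omega

end shiftedFactor

theorem shifted_jack_eval_nonneg_general (α : ℝ) (hα : 0 < α) (n : ℕ)
    (μ lam : ℕ → ℕ)
    (hμ : ∀ k l, 1 ≤ k → k ≤ l → μ l ≤ μ k)
    (hlam : ∀ k l, 1 ≤ k → k ≤ l → lam l ≤ lam k)
    (RSSYT : Finset ((ℕ × ℕ) → ℕ))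
    (hT : ∀ T ∈ RSSYT,
      (∀ i j, 1 ≤ i → 1 ≤ j → j ≤ μ i → 1 ≤ T (i, j) ∧ T (i, j) ≤ n) ∧
      (∀ i j, 1 ≤ i → 1 ≤ j → j + 1 ≤ μ i → T (i, j + 1) ≤ T (i, j)) ∧
      (∀ i j, 1 ≤ i → 1 ≤ j → j ≤ μ (i + 1) → T (i + 1, j) < T (i, j)))
    (ψ : ((ℕ × ℕ) → ℕ) → ℝ) (hψ : ∀ T ∈ RSSYT, 0 ≤ ψ T) :
    0 ≤ ∑ T ∈ RSSYT, ψ T *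
      ∏ s ∈ youngBoxes μ n,
        ((lam (T s) : ℝ) - ((s.2 : ℝ) - 1) + ((s.1 : ℝ) - 1) / α) := by
  refine sum_nonneg fun T hTmem => mul_nonneg (hψ T hTmem) ?_
  obtain ⟨hbound, hrow, hcol⟩ := hT T hTmem
  exact prod_nonneg_of_neg_imp_exists_zero fun s hs hneg =>
    shiftedFactor_exists_zero_of_neg hα hμ hlam (fun i j hi hj hjμ => (hbound i j hi hj hjμ).1)
      hrow hcol hs hneg

/-- Nonnegativity of `P^#_μ(λ)` for `α > 0`: every summand of the combinatorial formula
`P^#_μ(λ) = ∑_{T ∈ RSSYT(μ,n)} ψ_T(α) ∏_{(i,j) ∈ μ} (λ_{T(i,j)} − (j−1) + (i−1)/α)`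
is nonnegative, hence the whole sum is. Here `RSSYT` is the (finite) set of reverse
semistandard tableaux of shape `μ` with entries in `{1,…,n}` (weakly decreasing along
rows, strictly decreasing down columns), and `ψ T = ψ_T(α) ≥ 0`. -/
theorem shifted_jack_eval_nonneg (α : ℝ) (hα : 0 < α) (n : ℕ)
    (μ lam : ℕ → ℕ)
    (hμrows : ∀ k, n < k → μ k = 0)
    (hμ : ∀ k l, 1 ≤ k → k ≤ l → μ l ≤ μ k)
    (hlam : ∀ k l, 1 ≤ k → k ≤ l → lam l ≤ lam k)
    (RSSYT : Finset ((ℕ × ℕ) → ℕ))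
    (hT : ∀ T ∈ RSSYT,
      (∀ i j, 1 ≤ i → 1 ≤ j → j ≤ μ i → 1 ≤ T (i, j) ∧ T (i, j) ≤ n) ∧
      (∀ i j, 1 ≤ i → 1 ≤ j → j + 1 ≤ μ i → T (i, j + 1) ≤ T (i, j)) ∧
      (∀ i j, 1 ≤ i → 1 ≤ j → j ≤ μ (i + 1) → T (i + 1, j) < T (i, j)))
    (ψ : ((ℕ × ℕ) → ℕ) → ℝ) (hψ : ∀ T ∈ RSSYT, 0 ≤ ψ T) :
    0 ≤ ∑ T ∈ RSSYT, ψ T *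
      ∏ s ∈ youngBoxes μ n,
        ((lam (T s) : ℝ) - ((s.2 : ℝ) - 1) + ((s.1 : ℝ) - 1) / α) :=
  shifted_jack_eval_nonneg_general α hα n μ lam hμ hlam RSSYT hT ψ hψ
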